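/- For every (t,x,y)∈ℝ×ℝ^{p_0}×ℝ^{p_1}, every v∈ℝ^{p_0} and every δ∈ℝ, it holds g_{v,δ}(t,x,y) − (t,x,y) = (0, 0, δ³ R(δ,v)), where R(δ,v) := Σ_{n=0}^∞ ((−1)^n δ^{2n}/(n+1)!) (B^{n+1})_{1,0} v and the series converges absolutely. In particular the time component and the x-component of (t,x,y) are left unchanged by g_{v,δ}. -/

import Mathlib

noncomputable section

open Matrix

/-- Matrix exponential. -/
def mexp {n : Type*} [Fintype n] [DecidableEq n] (M : Matrix n n ℝ) : Matrix n n ℝ :=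
  NormedSpace.exp M

variable {p₀ p₁ : ℕ}

/-- `γ⁰_{v,δ}(t,x,y) := (t, x + δ v, y)`. -/
def gamma0 (v : Fin p₀ → ℝ) (δ : ℝ) (z : ℝ × (Fin p₀ → ℝ) × (Fin p₁ → ℝ)) :
    ℝ × (Fin p₀ → ℝ) × (Fin p₁ → ℝ) :=
  (z.1, z.2.1 + δ • v, z.2.2)

/-- `e^{δY}(t,x,y) := (t + δ, e^{δB}(x,y)ᵀ)`. -/
def expY (B : Matrix (Fin p₀ ⊕ Fin p₁) (Fin p₀ ⊕ Fin p₁) ℝ) (δ : ℝ)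
    (z : ℝ × (Fin p₀ → ℝ) × (Fin p₁ → ℝ)) : ℝ × (Fin p₀ → ℝ) × (Fin p₁ → ℝ) :=
  (z.1 + δ,
    fun i => (mexp (δ • B)).mulVec (Sum.elim z.2.1 z.2.2) (Sum.inl i),
    fun i => (mexp (δ • B)).mulVec (Sum.elim z.2.1 z.2.2) (Sum.inr i))

/-- `γ_{v,δ} := γ⁰_{B₀₀v,−δ³} ∘ e^{−δ²Y} ∘ γ⁰_{v,−δ} ∘ e^{δ²Y} ∘ γ⁰_{v,δ}`. -/
def gammaC (B : Matrix (Fin p₀ ⊕ Fin p₁) (Fin p₀ ⊕ Fin p₁) ℝ) (v : Fin p₀ → ℝ) (δ : ℝ) :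
    ℝ × (Fin p₀ → ℝ) × (Fin p₁ → ℝ) → ℝ × (Fin p₀ → ℝ) × (Fin p₁ → ℝ) :=
  gamma0 ((toBlocks₁₁ B).mulVec v) (-δ ^ 3) ∘ expY B (-δ ^ 2) ∘ gamma0 v (-δ) ∘
    expY B (δ ^ 2) ∘ gamma0 v δ

/-- `g_{v,δ} := γ⁰_{v′,δ⁵} ∘ γ_{v,δ}` where
`v′ := Σ_{n} ((−1)^n δ^{2n}/(n+2)!) (B^{n+2})₀₀ v`. -/
def gC (B : Matrix (Fin p₀ ⊕ Fin p₁) (Fin p₀ ⊕ Fin p₁) ℝ) (v : Fin p₀ → ℝ) (δ : ℝ) :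
    ℝ × (Fin p₀ → ℝ) × (Fin p₁ → ℝ) → ℝ × (Fin p₀ → ℝ) × (Fin p₁ → ℝ) :=
  gamma0 (∑' n : ℕ, ((-1 : ℝ) ^ n * δ ^ (2 * n) / (n + 2).factorial) •
      (toBlocks₁₁ (B ^ (n + 2))).mulVec v) (δ ^ 5) ∘ gammaC B v δ

/-- Euclidean norm on `ℝ^p`. -/
def enorm {p : ℕ} (x : Fin p → ℝ) : ℝ := Real.sqrt (∑ i, x i ^ 2)

/-!
Put `u := (v, 0)`. The three middle factors of `γ_{v,δ}` conjugate the translation by `-δ u`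
by `e^{δ²B}`, so `γ_{v,δ}` moves `(x, y)` by `δ u - δ e^{-δ²B} u - δ³ (B₀₀ v, 0)`. In the
exponential series of `e^{-δ²B} u`, the terms of order `0` and `1` of the `x`-block cancel `δ v`
and `-δ³ B₀₀ v`, and its tail is exactly what the final translation by `δ⁵ v′` removes; the
`y`-block has no term of order `0`, and what remains of it is `δ³ R(δ, v)`.
-/

open scoped Nat

section ExpSeries

variable {E : Type*} [AddCommGroup E] [Module ℝ E] {s : ℝ} {X : ℕ → E}

theorem pow_add_div_factorial_smul (j n : ℕ) :
    (s ^ (n + j) / (n + j)!) • X (n + j) = s ^ j • (s ^ n / (n + j)!) • X (n + j) := by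
  rw [smul_smul]
  ring_nf

variable [TopologicalSpace E] [IsTopologicalAddGroup E] [ContinuousConstSMul ℝ E]

theorem HasSum.eq_sum_range_add_pow_smul_tsum [T2Space E] {a : E}
    (h : HasSum (fun k => (s ^ k / k !) • X k) a) (j : ℕ) :
    a = ∑ k ∈ Finset.range j, (s ^ k / k !) • X k +
      s ^ j • ∑' n, (s ^ n / (n + j)!) • X (n + j) := by
  have htail := (hasSum_nat_add_iff' j).2 h
  simp_rw [pow_add_div_factorial_smul] at htail
  rw [← tsum_const_smul'', htail.tsum_eq]
  abel

theorem Summable.pow_div_factorial_add_smul (h : Summable fun k => (s ^ k / k !) • X k) (j : ℕ) :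
    Summable fun n => (s ^ n / (n + j)!) • X (n + j) := by
  rcases eq_or_ne s 0 with rfl | hs
  · refine summable_of_ne_finset_zero (s := {0}) fun n hn => ?_
    simp [zero_pow (by simpa using hn : n ≠ 0)]
  · refine (((summable_nat_add_iff j).2 h).const_smul (s ^ j)⁻¹).congr fun n => ?_
    rw [pow_add_div_factorial_smul, inv_smul_smul₀ (pow_ne_zero j hs)]

end ExpSeries

section MatrixExp

variable {d : Type*} [Fintype d] [DecidableEq d]

theorem hasSum_mexp_smul (s : ℝ) (B : Matrix d d ℝ) :
    HasSum (fun k : ℕ => (s ^ k / k !) • B ^ k) (mexp (s • B)) := by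
  simp_rw [div_eq_inv_mul, ← smul_smul, ← smul_pow]
  -- any submultiplicative norm will do: they all induce the product topology
  let _ : NormedRing (Matrix d d ℝ) := Matrix.linftyOpNormedRing
  let _ : NormedAlgebra ℝ (Matrix d d ℝ) := Matrix.linftyOpNormedAlgebra
  exact NormedSpace.exp_series_hasSum_exp' (s • B)

theorem mexp_neg_smul_mulVec_mexp_smul_mulVec (s : ℝ) (B : Matrix d d ℝ) (w : d → ℝ) :
    mexp (-s • B) *ᵥ (mexp (s • B) *ᵥ w) = w := by
  rw [mulVec_mulVec, mexp, mexp,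
    ← Matrix.exp_add_of_commute _ _ ((Commute.refl B).smul_left _ |>.smul_right _),
    neg_smul, neg_add_cancel, NormedSpace.exp_zero, one_mulVec]

end MatrixExp

section Blocks

variable {m n : Type*}

@[simp]
theorem toBlocks₁₁_smul (c : ℝ) (M : Matrix (m ⊕ n) (m ⊕ n) ℝ) :
    toBlocks₁₁ (c • M) = c • toBlocks₁₁ M :=
  rfl

@[simp]
theorem toBlocks₂₁_smul (c : ℝ) (M : Matrix (m ⊕ n) (m ⊕ n) ℝ) :
    toBlocks₂₁ (c • M) = c • toBlocks₂₁ M :=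
  rfl

@[simp]
theorem toBlocks₁₁_one [DecidableEq m] [DecidableEq n] :
    toBlocks₁₁ (1 : Matrix (m ⊕ n) (m ⊕ n) ℝ) = 1 :=
  toBlocks₁₁_diagonal _

@[simp]
theorem toBlocks₂₁_one [DecidableEq m] [DecidableEq n] :
    toBlocks₂₁ (1 : Matrix (m ⊕ n) (m ⊕ n) ℝ) = 0 :=
  toBlocks₂₁_diagonal _

theorem mulVec_sumElim_zero [Fintype m] [Fintype n] (M : Matrix (m ⊕ n) (m ⊕ n) ℝ) (v : m → ℝ) :
    M *ᵥ Sum.elim v 0 = Sum.elim (toBlocks₁₁ M *ᵥ v) (toBlocks₂₁ M *ᵥ v) := by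
  conv_lhs => rw [← fromBlocks_toBlocks M]
  simp [fromBlocks_mulVec]

theorem HasSum.toBlocks₁₁_mulVec [Fintype m] {ι : Type*} {f : ι → Matrix (m ⊕ n) (m ⊕ n) ℝ}
    {a : Matrix (m ⊕ n) (m ⊕ n) ℝ} (h : HasSum f a) (v : m → ℝ) :
    HasSum (fun i => toBlocks₁₁ (f i) *ᵥ v) (toBlocks₁₁ a *ᵥ v) :=
  h.map (AddMonoidHom.mk' (fun M => toBlocks₁₁ M *ᵥ v) fun _ _ => add_mulVec _ _ _)
    (Continuous.matrix_mulVec (by unfold toBlocks₁₁; fun_prop) continuous_const)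

theorem HasSum.toBlocks₂₁_mulVec [Fintype m] {ι : Type*} {f : ι → Matrix (m ⊕ n) (m ⊕ n) ℝ}
    {a : Matrix (m ⊕ n) (m ⊕ n) ℝ} (h : HasSum f a) (v : m → ℝ) :
    HasSum (fun i => toBlocks₂₁ (f i) *ᵥ v) (toBlocks₂₁ a *ᵥ v) :=
  h.map (AddMonoidHom.mk' (fun M => toBlocks₂₁ M *ᵥ v) fun _ _ => add_mulVec _ _ _)
    (Continuous.matrix_mulVec (by unfold toBlocks₂₁; fun_prop) continuous_const)

variable [Fintype m] [Fintype n] [DecidableEq m] [DecidableEq n]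
  (s : ℝ) (B : Matrix (m ⊕ n) (m ⊕ n) ℝ) (v : m → ℝ)

theorem hasSum_toBlocks₁₁_mexp_smul_mulVec :
    HasSum (fun k : ℕ => (s ^ k / k !) • (toBlocks₁₁ (B ^ k) *ᵥ v))
      (toBlocks₁₁ (mexp (s • B)) *ᵥ v) := by
  simpa only [toBlocks₁₁_smul, smul_mulVec] using (hasSum_mexp_smul s B).toBlocks₁₁_mulVec v

theorem hasSum_toBlocks₂₁_mexp_smul_mulVec :
    HasSum (fun k : ℕ => (s ^ k / k !) • (toBlocks₂₁ (B ^ k) *ᵥ v))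
      (toBlocks₂₁ (mexp (s • B)) *ᵥ v) := by
  simpa only [toBlocks₂₁_smul, smul_mulVec] using (hasSum_mexp_smul s B).toBlocks₂₁_mulVec v

theorem toBlocks₁₁_mexp_smul_mulVec :
    toBlocks₁₁ (mexp (s • B)) *ᵥ v =
      v + s • (toBlocks₁₁ B *ᵥ v) +
        s ^ 2 • ∑' n, (s ^ n / (n + 2)!) • (toBlocks₁₁ (B ^ (n + 2)) *ᵥ v) := by
  rw [(hasSum_toBlocks₁₁_mexp_smul_mulVec s B v).eq_sum_range_add_pow_smul_tsum 2]
  simp [Finset.sum_range_succ]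

theorem toBlocks₂₁_mexp_smul_mulVec :
    toBlocks₂₁ (mexp (s • B)) *ᵥ v =
      s • ∑' n, (s ^ n / (n + 1)!) • (toBlocks₂₁ (B ^ (n + 1)) *ᵥ v) := by
  rw [(hasSum_toBlocks₂₁_mexp_smul_mulVec s B v).eq_sum_range_add_pow_smul_tsum 1]
  simp

end Blocks

theorem gammaC_apply (B : Matrix (Fin p₀ ⊕ Fin p₁) (Fin p₀ ⊕ Fin p₁) ℝ) (v : Fin p₀ → ℝ)
    (δ t : ℝ) (x : Fin p₀ → ℝ) (y : Fin p₁ → ℝ) :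
    gammaC B v δ (t, x, y) =
      (t, x + δ • v - δ • (toBlocks₁₁ (mexp ((-δ ^ 2) • B)) *ᵥ v) - δ ^ 3 • (toBlocks₁₁ B *ᵥ v),
        y - δ • (toBlocks₂₁ (mexp ((-δ ^ 2) • B)) *ᵥ v)) := by
  have hsplit : ∀ P : Fin p₀ ⊕ Fin p₁ → ℝ,
      Sum.elim ((fun i => P (Sum.inl i)) + -δ • v) (fun j => P (Sum.inr j)) =
        P - δ • Sum.elim v 0 := by
    intro P
    ext (i | j) <;> simp [sub_eq_add_neg]
  simp only [gammaC, gamma0, expY, Function.comp_apply]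
  rw [hsplit, mulVec_sub, mulVec_smul, mexp_neg_smul_mulVec_mexp_smul_mulVec, mulVec_sumElim_zero]
  ext <;> simp [sub_eq_add_neg]

theorem stmt_2_general {p₀ p₁ : ℕ}
    (B : Matrix (Fin p₀ ⊕ Fin p₁) (Fin p₀ ⊕ Fin p₁) ℝ)
    (t : ℝ) (x : Fin p₀ → ℝ) (y : Fin p₁ → ℝ) (v : Fin p₀ → ℝ) (δ : ℝ) :
    (Summable fun n : ℕ => ‖((-1 : ℝ) ^ n * δ ^ (2 * n) / (n + 1).factorial) •
        (toBlocks₂₁ (B ^ (n + 1))).mulVec v‖) ∧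
      gC B v δ (t, x, y) =
        (t, x,
          y + δ ^ 3 • ∑' n : ℕ, ((-1 : ℝ) ^ n * δ ^ (2 * n) / (n + 1).factorial) •
            (toBlocks₂₁ (B ^ (n + 1))).mulVec v) := by
  have hcoef : ∀ n : ℕ, (-1 : ℝ) ^ n * δ ^ (2 * n) = (-δ ^ 2) ^ n := fun n => by
    rw [pow_mul, ← mul_pow, neg_one_mul]
  simp only [gC, Function.comp_apply, gammaC_apply, gamma0, hcoef]
  refine ⟨summable_norm_iff.2 <|
    (hasSum_toBlocks₂₁_mexp_smul_mulVec _ B v).summable.pow_div_factorial_add_smul 1, ?_⟩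
  rw [toBlocks₁₁_mexp_smul_mulVec, toBlocks₂₁_mexp_smul_mulVec]
  refine Prod.ext rfl (Prod.ext ?_ ?_) <;> dsimp only <;> module

/-- `g_{v,δ}(t,x,y) − (t,x,y) = (0, 0, δ³ R(δ,v))` where
`R(δ,v) := Σ_{n} ((−1)^n δ^{2n}/(n+1)!) (B^{n+1})₁₀ v` converges absolutely; in
particular the time component and the `x`-component are unchanged. -/
theorem stmt_2 {p₀ p₁ : ℕ} (hp₀ : 1 ≤ p₀) (hp₁ : 1 ≤ p₁)
    (B : Matrix (Fin p₀ ⊕ Fin p₁) (Fin p₀ ⊕ Fin p₁) ℝ)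
    (t : ℝ) (x : Fin p₀ → ℝ) (y : Fin p₁ → ℝ) (v : Fin p₀ → ℝ) (δ : ℝ) :
    (Summable fun n : ℕ => ‖((-1 : ℝ) ^ n * δ ^ (2 * n) / (n + 1).factorial) •
        (toBlocks₂₁ (B ^ (n + 1))).mulVec v‖) ∧
      gC B v δ (t, x, y) =
        (t, x,
          y + δ ^ 3 • ∑' n : ℕ, ((-1 : ℝ) ^ n * δ ^ (2 * n) / (n + 1).factorial) •
            (toBlocks₂₁ (B ^ (n + 1))).mulVec v) :=
  stmt_2_general B t x y v δ
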